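/- arXiv:2108.07652 — 2 statements merged into one kernel-verified Lean document; each statement's English description precedes it below -/
import Mathlib

section
/- Let x₁, …, x_M be pairwise non-equivalent nonzero vectors in Fⁿ (F a finite field with q elements, n ≥ 2), and let Y₁, …, Y_M be independent uniform random vectors in Fⁿ. Define Sᵢ = ⋃_{j≤i} L(x_j, Y_j) and θᵢ = E[#Sᵢ]. Then θᵢ = θ_{i−1}·(1 − 1/q^{n−1}) + q for 2 ≤ i ≤ M, with θ₁ = q, and consequently θ_M = q·(1 − 1/q^{n−1})^{M−1} + qⁿ·(1 − (1 − 1/q^{n−1})^{M−1}). -/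
/-- The line through `y` with direction `x` in `Fⁿ`. -/
def kakeyaLine {F : Type*} [Field F] [Fintype F] [DecidableEq F] {n : ℕ}
    (x y : Fin n → F) : Finset (Fin n → F) :=
  Finset.image (fun a : F => y + a • x) Finset.univ

section helpers
variable {F : Type*} [Field F] [Fintype F] [DecidableEq F] {n : ℕ}

lemma mem_kakeyaLine {x y z : Fin n → F} :
    z ∈ kakeyaLine x y ↔ ∃ a : F, y + a • x = z := by
  simp [kakeyaLine]

lemma kakeyaLine_card {x : Fin n → F} (hx : x ≠ 0) (y : Fin n → F) :
    (kakeyaLine x y).card = Fintype.card F := by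
  rw [kakeyaLine, Finset.card_image_of_injective _ ?_, Finset.card_univ]
  intro a b hab
  simp only at hab
  have h : (a - b) • x = 0 := by rw [sub_smul, add_left_cancel hab, sub_self]
  rcases smul_eq_zero.mp h with h1 | h2
  · exact sub_eq_zero.mp h1
  · exact absurd h2 hx

lemma mem_kakeyaLine_swap {x v z : Fin n → F} :
    z ∈ kakeyaLine x v ↔ v ∈ kakeyaLine (-x) z := by
  simp only [mem_kakeyaLine]
  constructor
  · rintro ⟨a, ha⟩; exact ⟨a, by rw [smul_neg, ← ha]; abel⟩
  · rintro ⟨a, ha⟩; exact ⟨a, by rw [← ha, smul_neg]; abel⟩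

lemma sum_card_inter {x : Fin n → F} (hx : x ≠ 0) (C : Finset (Fin n → F)) :
    ∑ v : Fin n → F, (kakeyaLine x v ∩ C).card = Fintype.card F * C.card := by
  have h1 : ∀ v : Fin n → F, (kakeyaLine x v ∩ C).card
      = ∑ z ∈ C, if z ∈ kakeyaLine x v then 1 else 0 := by
    intro v
    rw [Finset.inter_comm, ← Finset.filter_mem_eq_inter, Finset.card_filter]
  simp only [h1]
  rw [Finset.sum_comm]
  have h2 : ∀ z : Fin n → F,
      ∑ v : Fin n → F, (if z ∈ kakeyaLine x v then 1 else 0) = Fintype.card F := by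
    intro z
    have : ∀ v : Fin n → F, (if z ∈ kakeyaLine x v then 1 else 0)
        = if v ∈ kakeyaLine (-x) z then 1 else 0 := by
      intro v; simp only [mem_kakeyaLine_swap (x := x)]
    rw [Finset.sum_congr rfl (fun v _ => this v), ← Finset.card_filter,
      Finset.filter_mem_eq_inter, Finset.univ_inter]
    exact kakeyaLine_card (neg_ne_zero.mpr hx) z
  rw [Finset.sum_congr rfl (fun z _ => h2 z), Finset.sum_const, smul_eq_mul, mul_comm]

/-- Summing over an extra copy of the j-th coordinate. -/
lemma sum_update {M : ℕ} (j : Fin M) (h : (Fin M → (Fin n → F)) → ℕ) :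
    ∑ Y : Fin M → (Fin n → F), ∑ v : Fin n → F, h (Function.update Y j v)
      = Fintype.card (Fin n → F) * ∑ Y : Fin M → (Fin n → F), h Y := by
  classical
  have hbij : Function.Bijective
      (fun p : (Fin M → (Fin n → F)) × (Fin n → F) =>
        ((Function.update p.1 j p.2, p.1 j) : (Fin M → (Fin n → F)) × (Fin n → F))) := by
    apply Function.Involutive.bijective
    rintro ⟨Y, v⟩
    simp [Function.update_idem, Function.update_eq_self]
  calc ∑ Y : Fin M → (Fin n → F), ∑ v : Fin n → F, h (Function.update Y j v)
      = ∑ p : (Fin M → (Fin n → F)) × (Fin n → F), h (Function.update p.1 j p.2) := by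
        rw [Fintype.sum_prod_type]
    _ = ∑ p : (Fin M → (Fin n → F)) × (Fin n → F), h p.1 :=
        Fintype.sum_bijective _ hbij _ _ (fun p => rfl)
    _ = _ := by
        rw [Fintype.sum_prod_type]
        simp only [Finset.sum_const, Finset.card_univ, smul_eq_mul, Fintype.card_fun,
          Fintype.card_fin]
        rw [← Finset.mul_sum]

end helpers

section cond
variable {F : Type*} [Field F] [Fintype F] [DecidableEq F] {n : ℕ}

lemma cond_sum {M : ℕ} (j : Fin M) {x : Fin n → F} (hx : x ≠ 0)
    (A : (Fin M → (Fin n → F)) → Finset (Fin n → F))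
    (hA : ∀ Y v, A (Function.update Y j v) = A Y) :
    Fintype.card (Fin n → F) *
        ∑ Y : Fin M → (Fin n → F), (kakeyaLine x (Y j) ∩ A Y).card
      = Fintype.card F * ∑ Y : Fin M → (Fin n → F), (A Y).card := by
  rw [← sum_update j (fun Y => (kakeyaLine x (Y j) ∩ A Y).card)]
  have h1 : ∀ Y : Fin M → (Fin n → F), ∀ v : Fin n → F,
      (kakeyaLine x ((Function.update Y j v) j) ∩ A (Function.update Y j v)).card
        = (kakeyaLine x v ∩ A Y).card := by
    intro Y v
    rw [Function.update_self, hA]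
  calc ∑ Y : Fin M → (Fin n → F), ∑ v : Fin n → F,
        (kakeyaLine x ((Function.update Y j v) j) ∩ A (Function.update Y j v)).card
      = ∑ Y : Fin M → (Fin n → F), ∑ v : Fin n → F, (kakeyaLine x v ∩ A Y).card := by
        exact Finset.sum_congr rfl (fun Y _ => Finset.sum_congr rfl (fun v _ => h1 Y v))
    _ = ∑ Y : Fin M → (Fin n → F), Fintype.card F * (A Y).card :=
        Finset.sum_congr rfl (fun Y _ => sum_card_inter hx (A Y))
    _ = _ := by rw [Finset.mul_sum]

end cond



/-- With Y₁,…,Y_M independent uniform on Fⁿ, θ i = E[#(⋃_{j ≤ i} L(x_j, Y_j))]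
    (written as an average over all tuples (Y₁,…,Y_M)) satisfies the recursion
    θ i = θ (i−1)·(1 − 1/q^{n−1}) + q with θ 1 = q, and consequently
    θ M = q·(1 − 1/q^{n−1})^{M−1} + qⁿ·(1 − (1 − 1/q^{n−1})^{M−1}). -/
theorem stmt_7 {F : Type*} [Field F] [Fintype F] [DecidableEq F] {n : ℕ}
    (hn : 2 ≤ n) (q : ℕ) (hq : Fintype.card F = q)
    (M : ℕ) (hM : 1 ≤ M) (x : Fin M → (Fin n → F))
    (hx0 : ∀ i, x i ≠ 0)
    (hne : ∀ i j, i ≠ j → ∀ a : F, a ≠ 0 → x i ≠ a • x j)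
    (θ : ℕ → ℝ)
    (hθ : ∀ i, θ i =
      (∑ Y : Fin M → (Fin n → F),
        (((Finset.univ.filter (fun j : Fin M => (j : ℕ) < i)).biUnion
          (fun j => kakeyaLine (x j) (Y j))).card : ℝ))
        / (Fintype.card (Fin M → (Fin n → F)) : ℝ)) :
    θ 1 = q ∧
    (∀ i, 2 ≤ i → i ≤ M → θ i = θ (i - 1) * (1 - 1 / (q : ℝ) ^ (n - 1)) + q) ∧
    θ M = (q : ℝ) * (1 - 1 / (q : ℝ) ^ (n - 1)) ^ (M - 1)
      + (q : ℝ) ^ n * (1 - (1 - 1 / (q : ℝ) ^ (n - 1)) ^ (M - 1)) := by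

  classical
  have hq1 : 1 ≤ q := hq ▸ Fintype.card_pos
  have hqR : (0 : ℝ) < (q : ℝ) := by exact_mod_cast hq1
  have hqn1 : (0 : ℝ) < (q : ℝ) ^ (n - 1) := pow_pos hqR _
  have hqnn : ((q : ℝ)) ^ n = (q : ℝ) ^ (n - 1) * q := by
    rw [← pow_succ]; congr 1; omega
  have hN : (0 : ℝ) < (Fintype.card (Fin M → (Fin n → F)) : ℝ) := by
    exact_mod_cast Fintype.card_pos
  set N : ℝ := (Fintype.card (Fin M → (Fin n → F)) : ℝ) with hNdef
  -- Part 1: θ 1 = q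
  have part1 : θ 1 = q := by
    have j0 : Fin M := ⟨0, hM⟩
    have hfilt : Finset.univ.filter (fun j : Fin M => (j : ℕ) < 1)
        = {(⟨0, hM⟩ : Fin M)} := by
      ext k
      simp [Fin.ext_iff]
      try omega
    rw [hθ 1, hfilt]
    have : ∀ Y : Fin M → (Fin n → F),
        ((({(⟨0, hM⟩ : Fin M)} : Finset (Fin M)).biUnion
          (fun j => kakeyaLine (x j) (Y j))).card : ℝ) = q := by
      intro Y
      rw [Finset.singleton_biUnion, kakeyaLine_card (hx0 _), hq]
    rw [Finset.sum_congr rfl (fun Y _ => this Y), Finset.sum_const, nsmul_eq_mul,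
      Finset.card_univ, ← hNdef, mul_comm, mul_div_assoc, div_self (ne_of_gt hN), mul_one]
  -- Part 2: recursion
  have part2 : ∀ i, 2 ≤ i → i ≤ M →
      θ i = θ (i - 1) * (1 - 1 / (q : ℝ) ^ (n - 1)) + q := by
    intro i hi2 hiM
    set j : Fin M := ⟨i - 1, by omega⟩ with hj
    set A : (Fin M → (Fin n → F)) → Finset (Fin n → F) :=
      fun Y => (Finset.univ.filter (fun k : Fin M => (k : ℕ) < i - 1)).biUnion
        (fun k => kakeyaLine (x k) (Y k)) with hAdef
    have hfilt : Finset.univ.filter (fun k : Fin M => (k : ℕ) < i)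
        = insert j (Finset.univ.filter (fun k : Fin M => (k : ℕ) < i - 1)) := by
      ext k
      simp [Fin.ext_iff, hj]
      omega
    have hjmem : j ∉ Finset.univ.filter (fun k : Fin M => (k : ℕ) < i - 1) := by
      simp [hj]
    -- pointwise union decomposition
    have hdecomp : ∀ Y : Fin M → (Fin n → F),
        ((Finset.univ.filter (fun k : Fin M => (k : ℕ) < i)).biUnion
          (fun k => kakeyaLine (x k) (Y k)))
        = kakeyaLine (x j) (Y j) ∪ A Y := by
      intro Y
      rw [hfilt, Finset.biUnion_insert]
    -- invariance of A under updating coordinate j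
    have hA : ∀ Y v, A (Function.update Y j v) = A Y := by
      intro Y v
      apply Finset.biUnion_congr rfl
      intro k hk
      have hkj : k ≠ j := by
        simp only [Finset.mem_filter, Finset.mem_univ, true_and] at hk
        intro h
        rw [h, hj] at hk
        simp at hk
        try omega
      rw [Function.update_of_ne hkj]
    -- natural-number identities
    have key1 : ∀ Y : Fin M → (Fin n → F),
        ((kakeyaLine (x j) (Y j) ∪ A Y).card : ℝ)
          + ((kakeyaLine (x j) (Y j) ∩ A Y).card : ℝ)
          = q + ((A Y).card : ℝ) := by
      intro Y
      have h := Finset.card_union_add_card_inter (kakeyaLine (x j) (Y j)) (A Y)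
      have hc : (kakeyaLine (x j) (Y j)).card = q := by
        rw [kakeyaLine_card (hx0 _), hq]
      rw [hc] at h
      exact_mod_cast h
    have key2 : ((q : ℝ) ^ n) *
          ∑ Y : Fin M → (Fin n → F), ((kakeyaLine (x j) (Y j) ∩ A Y).card : ℝ)
        = (q : ℝ) * ∑ Y : Fin M → (Fin n → F), ((A Y).card : ℝ) := by
      have := cond_sum j (hx0 j) A hA
      rw [Fintype.card_fun, Fintype.card_fin, hq] at this
      exact_mod_cast this
    set S : ℝ := ∑ Y : Fin M → (Fin n → F),
        (((Finset.univ.filter (fun k : Fin M => (k : ℕ) < i)).biUnion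
          (fun k => kakeyaLine (x k) (Y k))).card : ℝ) with hSdef
    set T : ℝ := ∑ Y : Fin M → (Fin n → F), ((A Y).card : ℝ) with hTdef
    set I : ℝ := ∑ Y : Fin M → (Fin n → F),
        ((kakeyaLine (x j) (Y j) ∩ A Y).card : ℝ) with hIdef
    have hsum1 : S + I = q * N + T := by
      rw [hSdef, hIdef, hTdef, ← Finset.sum_add_distrib]
      have : ∀ Y : Fin M → (Fin n → F),
          (((Finset.univ.filter (fun k : Fin M => (k : ℕ) < i)).biUnion
            (fun k => kakeyaLine (x k) (Y k))).card : ℝ)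
          + ((kakeyaLine (x j) (Y j) ∩ A Y).card : ℝ)
          = q + ((A Y).card : ℝ) := by
        intro Y
        rw [hdecomp Y]
        exact key1 Y
      rw [Finset.sum_congr rfl (fun Y _ => this Y), Finset.sum_add_distrib,
        Finset.sum_const, nsmul_eq_mul, Finset.card_univ, ← hNdef]
      ring
    have hI : I = T / (q : ℝ) ^ (n - 1) := by
      rw [hqnn] at key2
      field_simp
      nlinarith [key2]
    have hθi : θ i = S / N := hθ i
    have hθi1 : θ (i - 1) = T / N := by
      rw [hθ (i - 1)]
    have hS : S = q * N + T - I := by linarith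
    rw [hθi, hθi1, hS, hI]
    field_simp
    ring
  refine ⟨part1, part2, ?_⟩
  -- Part 3: closed form by induction
  set r : ℝ := 1 - 1 / (q : ℝ) ^ (n - 1) with hrdef
  have hkey : (q : ℝ) ^ n * r + q = (q : ℝ) ^ n := by
    rw [hrdef, hqnn]
    field_simp
    ring
  have claim : ∀ m : ℕ, m + 1 ≤ M →
      θ (m + 1) = (q : ℝ) * r ^ m + (q : ℝ) ^ n * (1 - r ^ m) := by
    intro m
    induction m with
    | zero => intro _; simpa using part1
    | succ m ih =>
      intro hm
      have h2 : θ (m + 2) = θ (m + 1) * r + q := by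
        have := part2 (m + 2) (by omega) (by omega)
        simpa using this
      rw [show m + 1 + 1 = m + 2 by ring, h2, ih (by omega)]
      have : r ^ (m + 1) = r ^ m * r := by ring
      rw [this]
      nlinarith [hkey, sq_nonneg (r ^ m)]
  have := claim (M - 1) (by omega)
  rw [show M - 1 + 1 = M by omega] at this
  exact this
end

section
/- Let F be a finite field with q elements and n ≥ 2. For every positive integer M ≤ (qⁿ−1)/(q−1) and every set {x₁,…,x_M} of pairwise non-equivalent nonzero vectors in Fⁿ, there exist y₁,…,y_M ∈ Fⁿ such that #(⋃_{i=1}^M L(xᵢ,yᵢ)) ≤ q + qⁿ(1 − (1 − 1/q^{n−1})^{M−1}). -/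
open Finset
open scoped Pointwise

namespace Finset

lemma sum_card_eq_sum_card_filter_mem {α β : Type*} [Fintype α] [Fintype β] [DecidableEq β]
    (S : α → Finset β) : ∑ a, #(S a) = ∑ b, #{a | b ∈ S a} := by
  simp only [card_eq_sum_ones]
  exact sum_comm' fun a b => by simp

variable {G ι : Type*} [AddCommGroup G] [Fintype G] [DecidableEq G] [Fintype ι] [DecidableEq ι]

lemma card_filter_mem_vadd_finset (A : Finset G) (z : G) : #{y : G | z ∈ y +ᵥ A} = #A := by
  have : ({y : G | z ∈ y +ᵥ A} : Finset G) = A.image (z - ·) := by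
    ext y
    simp only [mem_filter, mem_univ, true_and, mem_image]
    rw [← neg_vadd_mem_iff, vadd_eq_add, neg_add_eq_sub]
    exact ⟨fun h => ⟨z - y, h, sub_sub_cancel z y⟩, by rintro ⟨a, ha, rfl⟩; rwa [sub_sub_cancel]⟩
  rw [this, card_image_of_injective _ sub_right_injective]

lemma card_filter_forall_not_mem_vadd_finset (A : ι → Finset G) (z : G) :
    #{y : ι → G | ∀ i, z ∉ y i +ᵥ A i} = ∏ i, (Fintype.card G - #(A i)) := by
  have : ({y : ι → G | ∀ i, z ∉ y i +ᵥ A i} : Finset (ι → G)) =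
      Fintype.piFinset fun i => {a : G | z ∉ a +ᵥ A i} := by
    ext y; simp
  rw [this, Fintype.card_piFinset]
  refine prod_congr rfl fun i _ => ?_
  rw [filter_not, card_univ_sdiff, card_filter_mem_vadd_finset]

lemma sum_card_biUnion_vadd_finset_add (A : ι → Finset G) :
    ∑ y : ι → G, #(univ.biUnion fun i => y i +ᵥ A i) +
      Fintype.card G * ∏ i, (Fintype.card G - #(A i)) =
      Fintype.card G * Fintype.card G ^ Fintype.card ι := by
  have hcount (z : G) : #{y : ι → G | z ∈ univ.biUnion fun i => y i +ᵥ A i} +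
      ∏ i, (Fintype.card G - #(A i)) = Fintype.card G ^ Fintype.card ι := by
    rw [← card_filter_forall_not_mem_vadd_finset, ← Fintype.card_fun, ← card_univ]
    simpa using card_filter_add_card_filter_not (s := (univ : Finset (ι → G)))
      fun y => z ∈ univ.biUnion fun i => y i +ᵥ A i
  calc _ = ∑ z : G, (#{y : ι → G | z ∈ univ.biUnion fun i => y i +ᵥ A i} +
        ∏ i, (Fintype.card G - #(A i))) := by
        rw [sum_card_eq_sum_card_filter_mem, sum_add_distrib, sum_const, card_univ, smul_eq_mul]
    _ = _ := by simp only [hcount, sum_const, card_univ, smul_eq_mul]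

lemma exists_card_biUnion_vadd_finset_le (A : ι → Finset G) :
    ∃ y : ι → G, (#(univ.biUnion fun i => y i +ᵥ A i) : ℝ) ≤
      Fintype.card G * (1 - ∏ i, (1 - #(A i) / Fintype.card G : ℝ)) := by
  have hN : (0 : ℝ) < Fintype.card G := by exact_mod_cast Fintype.card_pos
  have hprod : ∏ i, (1 - #(A i) / Fintype.card G : ℝ) =
      (∏ i, (Fintype.card G - #(A i) : ℝ)) / (Fintype.card G : ℝ) ^ Fintype.card ι := by
    rw [← card_univ (α := ι), ← prod_const, ← prod_div_distrib]
    exact prod_congr rfl fun i _ => by field_simp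
  have hsum := congrArg (Nat.cast (R := ℝ)) (sum_card_biUnion_vadd_finset_add A)
  push_cast [Nat.cast_sub (card_le_univ _)] at hsum
  suffices h : ∑ y : ι → G, (#(univ.biUnion fun i => y i +ᵥ A i) : ℝ) ≤
      ∑ _y : ι → G, Fintype.card G * (1 - ∏ i, (1 - #(A i) / Fintype.card G : ℝ)) by
    obtain ⟨y, -, hy⟩ := exists_le_of_sum_le univ_nonempty h
    exact ⟨y, hy⟩
  rw [sum_const, card_univ, Fintype.card_fun, nsmul_eq_mul, hprod]
  push_cast
  field_simp
  linarith

end Finset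

lemma kakeyaLine_eq_vadd_finset {F : Type*} [Field F] [Fintype F] [DecidableEq F] {n : ℕ}
    (x y : Fin n → F) : kakeyaLine x y = y +ᵥ univ.image fun a : F => a • x := by
  rw [kakeyaLine, vadd_finset_def, image_image]
  rfl

lemma card_image_univ_smul_of_ne_zero {F V : Type*} [Field F] [Fintype F] [AddCommGroup V]
    [Module F V] [DecidableEq V] {x : V} (hx : x ≠ 0) :
    #(univ.image fun a : F => a • x) = Fintype.card F := by
  rw [card_image_of_injective _ (smul_left_injective F hx), card_univ]

lemma mul_one_sub_one_sub_pow_le {N p : ℝ} (hN : 0 ≤ N) (hp0 : 0 ≤ p) (hp1 : p ≤ 1) {M : ℕ}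
    (hM : 0 < M) : N * (1 - (1 - p) ^ M) ≤ N * p + N * (1 - (1 - p) ^ (M - 1)) := by
  obtain ⟨m, rfl⟩ : ∃ m, M = m + 1 := ⟨M - 1, by omega⟩
  have : N * p * (1 - p) ^ m ≤ N * p := mul_le_of_le_one_right (by positivity)
    (pow_le_one₀ (by linarith) (by linarith))
  rw [Nat.add_sub_cancel]
  linear_combination this

theorem stmt_15_general {F : Type*} [Field F] [Fintype F] [DecidableEq F] {n : ℕ}
    (hn : 2 ≤ n) (q : ℕ) (hq : Fintype.card F = q)
    (M : ℕ) (hM : 0 < M)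
    (x : Fin M → (Fin n → F))
    (hx0 : ∀ i, x i ≠ 0) :
    ∃ y : Fin M → (Fin n → F),
      ((Finset.univ.biUnion (fun i => kakeyaLine (x i) (y i))).card : ℝ)
        ≤ q + (q : ℝ) ^ n * (1 - (1 - 1 / (q : ℝ) ^ (n - 1)) ^ (M - 1)) := by
  obtain ⟨y, hy⟩ := exists_card_biUnion_vadd_finset_le fun i => univ.image fun a : F => a • x i
  refine ⟨y, ?_⟩
  have hq1 : (1 : ℝ) ≤ q := by exact_mod_cast hq ▸ Fintype.card_pos
  have hqn : (q : ℝ) ^ n = q * q ^ (n - 1) := by rw [← pow_succ', Nat.sub_add_cancel (by omega)]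
  have hdiv : (q : ℝ) / (q : ℝ) ^ n = 1 / q ^ (n - 1) := by
    rw [hqn, div_mul_cancel_left₀ (by positivity), one_div]
  simp only [← kakeyaLine_eq_vadd_finset, card_image_univ_smul_of_ne_zero (hx0 _),
    Fintype.card_fun, Fintype.card_fin, hq, prod_const, card_univ, Nat.cast_pow, hdiv] at hy
  calc _ ≤ _ := hy
    _ ≤ (q : ℝ) ^ n * (1 / q ^ (n - 1)) + q ^ n * (1 - (1 - 1 / q ^ (n - 1)) ^ (M - 1)) :=
      mul_one_sub_one_sub_pow_le (by positivity) (by positivity)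
        (div_le_one_of_le₀ (one_le_pow₀ hq1) (by positivity)) hM
    _ = _ := by rw [hqn]; field_simp

theorem stmt_15 {F : Type*} [Field F] [Fintype F] [DecidableEq F] {n : ℕ}
    (hn : 2 ≤ n) (q : ℕ) (hq : Fintype.card F = q)
    (M : ℕ) (hM : 0 < M) (hMle : M ≤ (q ^ n - 1) / (q - 1))
    (x : Fin M → (Fin n → F))
    (hx0 : ∀ i, x i ≠ 0)
    (hne : ∀ i j, i ≠ j → ∀ a : F, a ≠ 0 → x i ≠ a • x j) :
    ∃ y : Fin M → (Fin n → F),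
      ((Finset.univ.biUnion (fun i => kakeyaLine (x i) (y i))).card : ℝ)
        ≤ q + (q : ℝ) ^ n * (1 - (1 - 1 / (q : ℝ) ^ (n - 1)) ^ (M - 1)) :=
  stmt_15_general hn q hq M hM x hx0
end
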